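/- arXiv:2007.11026 — 2 statements merged into one kernel-verified Lean document; each statement's English description precedes it below -/
import Mathlib

section
/- Let T ≥ 1 and N ≥ 1, and let Σ and Σ̂ be symmetric T × T real matrices. With r_τ and R as defined via r_τ[M] = (1/N)·(1/(T−τ))·∑_{t=1}^{T−τ} M_{t,t+τ}, the ℓ1 error satisfies ∥R[Σ̂] − R[Σ]∥_1 := ∑_{τ=0}^{T−1} |r_τ[Σ̂] − r_τ[Σ]| ≤ (√(1 + log T)/N)·∥Σ − Σ̂∥_F, where log denotes the natural logarithm and ∥·∥_F is the Frobenius norm. -/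
/-!
By linearity of `acf` it suffices to bound `∑ τ, |r_τ[M]|` for `M = Σ - Σ̂`. The lag-`τ`
superdiagonal `d_τ` of `M` has `T - τ` entries, so Cauchy–Schwarz along it gives
`|r_τ[M]| ≤ N⁻¹ (T - τ)^(-1/2) ‖d_τ‖₂`. Cauchy–Schwarz over `τ` then bounds the sum by
`N⁻¹ (∑ τ, 1 / (T - τ))^(1/2) (∑ τ, ‖d_τ‖₂²)^(1/2)`: the first sum is the harmonic number
`H_T ≤ 1 + log T`, and the superdiagonals are disjoint, so the second is at most `‖M‖_F²`.
-/

open Finset Matrix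

/-- Frobenius norm of a real matrix. -/
noncomputable def frob {α β : Type*} [Fintype α] [Fintype β] (M : Matrix α β ℝ) : ℝ :=
  Real.sqrt (∑ i, ∑ j, (M i j) ^ 2)

/-- Lag-`τ` autocorrelation functional
`r_τ[M] = (1/N)·(1/(T−τ))·∑_{t=1}^{T−τ} M_{t,t+τ}` (0-based indexing). -/
noncomputable def acf (N : ℕ) {T : ℕ} (M : Matrix (Fin T) (Fin T) ℝ) (τ : ℕ) : ℝ :=
  (N : ℝ)⁻¹ * (((T - τ : ℕ) : ℝ))⁻¹ *
    ∑ t : Fin T, if h : (t : ℕ) + τ < T then M t ⟨(t : ℕ) + τ, h⟩ else 0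

lemma sum_range_inv_sub_le_one_add_log (T : ℕ) :
    ∑ τ ∈ range T, ((T - τ : ℕ) : ℝ)⁻¹ ≤ 1 + Real.log T := by
  have hreflect : ∑ τ ∈ range T, ((T - τ : ℕ) : ℝ)⁻¹ = harmonic T := by
    rw [harmonic, Rat.cast_sum, ← sum_range_reflect]
    refine sum_congr rfl fun τ hτ => ?_
    have := mem_range.1 hτ
    rw [Rat.cast_inv, Rat.cast_natCast]
    congr 2
    omega
  exact hreflect ▸ harmonic_le_one_add_log T

lemma sum_range_shift_le {h : ℕ → ℝ} {n : ℕ} (h_nonneg : ∀ k, 0 ≤ h k)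
    (h_zero : ∀ k, n ≤ k → h k = 0) (a : ℕ) :
    ∑ τ ∈ range n, h (a + τ) ≤ ∑ k ∈ range n, h k := by
  calc ∑ τ ∈ range n, h (a + τ) = ∑ k ∈ Ico a (a + n), h k := by
        rw [sum_Ico_eq_sum_range, Nat.add_sub_cancel_left]
    _ ≤ ∑ k ∈ range (a + n), h k :=
        sum_le_sum_of_subset_of_nonneg (fun k hk => mem_range.2 (mem_Ico.1 hk).2)
          fun k _ _ => h_nonneg k
    _ = ∑ k ∈ range n, h k := by
        refine (sum_subset (range_subset_range.2 (Nat.le_add_left n a)) fun k _ hk => ?_).symm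
        exact h_zero k (not_lt.1 (mem_range.not.1 hk))

lemma inv_mul_abs_le_sqrt_inv_mul_sqrt {c x s : ℝ} (hc : 0 ≤ c) (h : x ^ 2 ≤ c * s) :
    c⁻¹ * |x| ≤ √c⁻¹ * √s := by
  rw [← Real.sqrt_mul (inv_nonneg.2 hc)]
  refine Real.le_sqrt_of_sq_le ?_
  rcases hc.eq_or_lt with rfl | hc
  · simp
  calc (c⁻¹ * |x|) ^ 2 = c⁻¹ ^ 2 * x ^ 2 := by rw [mul_pow, sq_abs]
    _ ≤ c⁻¹ ^ 2 * (c * s) := by gcongr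
    _ = c⁻¹ * s := by field_simp

section Lag

variable {T : ℕ}

def lagDiagonal (M : Matrix (Fin T) (Fin T) ℝ) (τ : ℕ) (t : Fin T) : ℝ :=
  if h : (t : ℕ) + τ < T then M t ⟨(t : ℕ) + τ, h⟩ else 0

lemma acf_eq_sum_lagDiagonal (N : ℕ) (M : Matrix (Fin T) (Fin T) ℝ) (τ : ℕ) :
    acf N M τ = (N : ℝ)⁻¹ * ((T - τ : ℕ) : ℝ)⁻¹ * ∑ t, lagDiagonal M τ t :=
  rfl

lemma lagDiagonal_sub (A B : Matrix (Fin T) (Fin T) ℝ) (τ : ℕ) (t : Fin T) :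
    lagDiagonal (A - B) τ t = lagDiagonal A τ t - lagDiagonal B τ t := by
  unfold lagDiagonal
  split_ifs <;> simp

lemma acf_sub (N : ℕ) (A B : Matrix (Fin T) (Fin T) ℝ) (τ : ℕ) :
    acf N A τ - acf N B τ = acf N (A - B) τ := by
  simp only [acf_eq_sum_lagDiagonal, lagDiagonal_sub, sum_sub_distrib, mul_sub]

lemma card_filter_add_lt_le (τ : ℕ) : #{t : Fin T | (t : ℕ) + τ < T} ≤ T - τ := by
  simpa using card_le_card_of_injOn (t := range (T - τ)) Fin.val
    (fun t ht => by simp at ht ⊢; omega) Fin.val_injective.injOn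

lemma sq_sum_lagDiagonal_le (M : Matrix (Fin T) (Fin T) ℝ) (τ : ℕ) :
    (∑ t, lagDiagonal M τ t) ^ 2 ≤ ((T - τ : ℕ) : ℝ) * ∑ t, lagDiagonal M τ t ^ 2 := by
  set D : Finset (Fin T) := {t | (t : ℕ) + τ < T}
  have hsupport : ∑ t ∈ D, lagDiagonal M τ t = ∑ t, lagDiagonal M τ t :=
    sum_filter_of_ne fun t _ ht => by by_contra h; exact ht (dif_neg h)
  calc (∑ t, lagDiagonal M τ t) ^ 2 ≤ #D * ∑ t ∈ D, lagDiagonal M τ t ^ 2 :=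
        hsupport ▸ sq_sum_le_card_mul_sum_sq
    _ ≤ ((T - τ : ℕ) : ℝ) * ∑ t, lagDiagonal M τ t ^ 2 := by
        gcongr
        exacts [card_filter_add_lt_le τ, subset_univ D]

lemma sum_sum_lagDiagonal_sq_le (M : Matrix (Fin T) (Fin T) ℝ) :
    ∑ τ ∈ range T, ∑ t, lagDiagonal M τ t ^ 2 ≤ ∑ i, ∑ j, M i j ^ 2 := by
  rw [sum_comm]
  refine sum_le_sum fun i _ => ?_
  set row : ℕ → ℝ := fun k => if h : k < T then M i ⟨k, h⟩ ^ 2 else 0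
  have hrow : ∑ j, M i j ^ 2 = ∑ k ∈ range T, row k := by
    rw [← Fin.sum_univ_eq_sum_range]
    simp [row]
  have hlag : ∀ τ, lagDiagonal M τ i ^ 2 = row (i + τ) := by
    intro τ
    unfold lagDiagonal
    split_ifs <;> simp [row, *]
  simp only [hlag, hrow]
  refine sum_range_shift_le (fun k => ?_) (fun k hk => dif_neg hk.not_gt) i
  unfold row
  split_ifs <;> positivity

lemma abs_acf_le (N : ℕ) (M : Matrix (Fin T) (Fin T) ℝ) (τ : ℕ) :
    |acf N M τ| ≤ (N : ℝ)⁻¹ * (√((T - τ : ℕ) : ℝ)⁻¹ * √(∑ t, lagDiagonal M τ t ^ 2)) := by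
  rw [acf_eq_sum_lagDiagonal, abs_mul, abs_mul, abs_inv, abs_inv, Nat.abs_cast, Nat.abs_cast,
    mul_assoc]
  exact mul_le_mul_of_nonneg_left
    (inv_mul_abs_le_sqrt_inv_mul_sqrt (Nat.cast_nonneg _) (sq_sum_lagDiagonal_le M τ))
    (by positivity)

lemma sum_abs_acf_le (N : ℕ) (M : Matrix (Fin T) (Fin T) ℝ) :
    ∑ τ ∈ range T, |acf N M τ| ≤ √(1 + Real.log T) / N * frob M := by
  calc ∑ τ ∈ range T, |acf N M τ|
      ≤ (N : ℝ)⁻¹ * ∑ τ ∈ range T, √((T - τ : ℕ) : ℝ)⁻¹ * √(∑ t, lagDiagonal M τ t ^ 2) := by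
        rw [mul_sum]
        exact sum_le_sum fun τ _ => abs_acf_le N M τ
    _ ≤ (N : ℝ)⁻¹ * (√(∑ τ ∈ range T, ((T - τ : ℕ) : ℝ)⁻¹) *
          √(∑ τ ∈ range T, ∑ t, lagDiagonal M τ t ^ 2)) := by
        gcongr
        exact Real.sum_sqrt_mul_sqrt_le _ (fun τ => by positivity) fun τ => by positivity
    _ ≤ (N : ℝ)⁻¹ * (√(1 + Real.log T) * √(∑ i, ∑ j, M i j ^ 2)) := by
        gcongr
        exacts [sum_range_inv_sub_le_one_add_log T, sum_sum_lagDiagonal_sq_le M]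
    _ = √(1 + Real.log T) / N * frob M := by
        rw [frob]
        ring

end Lag

theorem acf_l1_bound_general (T N : ℕ)
    (S Shat : Matrix (Fin T) (Fin T) ℝ) :
    ∑ τ ∈ Finset.range T, |acf N Shat τ - acf N S τ| ≤
      Real.sqrt (1 + Real.log T) / N * frob (S - Shat) := by
  simp_rw [abs_sub_comm (acf N Shat _), acf_sub]
  exact sum_abs_acf_le N (S - Shat)

/-- ℓ1 bound
`∑_{τ=0}^{T−1} |r_τ[Σ̂] − r_τ[Σ]| ≤ (√(1 + log T)/N)·∥Σ − Σ̂∥_F`. -/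
theorem acf_l1_bound (T N : ℕ) (hT : 1 ≤ T) (hN : 1 ≤ N)
    (S Shat : Matrix (Fin T) (Fin T) ℝ) (hS : S.IsSymm) (hShat : Shat.IsSymm) :
    ∑ τ ∈ Finset.range T, |acf N Shat τ - acf N S τ| ≤
      Real.sqrt (1 + Real.log T) / N * frob (S - Shat) :=
  acf_l1_bound_general T N S Shat
end

section
/- Let T ≥ 1 and let Δ be a T × T real matrix. Then ∑_{τ=0}^{T−1} (1/(T−τ)) ∑_{t=1}^{T−τ} |Δ_{t,t+τ}| ≤ √(1 + log T) · ∥Δ∥_F, where the inner sums range over the diagonals of Δ on and above the main diagonal, log is the natural logarithm, and ∥·∥_F is the Frobenius norm. -/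
open Finset Matrix

/-! The `τ`-th upper diagonal of `Δ` has at most `T - τ` nonzero entries, so by Cauchy–Schwarz its
average absolute value `a_τ / (T - τ)` satisfies `a_τ² / (T - τ) ≤ q_τ`, where `q_τ` is the sum of
its squared entries. Cauchy–Schwarz across diagonals with weights `1 / (T - τ)` then gives
`(∑ a_τ / (T - τ))² ≤ (∑ 1 / (T - τ)) · ∑ q_τ`. The weights sum to the harmonic number
`H_T ≤ 1 + log T`, and the diagonals on and above the main one are disjoint, so `∑ q_τ ≤ ‖Δ‖_F²`. -/

def upperDiag {n : ℕ} {α : Type*} [Zero α] (M : Matrix (Fin n) (Fin n) α) (τ : ℕ) (t : Fin n) :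
    α :=
  if h : (t : ℕ) + τ < n then M t ⟨t + τ, h⟩ else 0

section UpperDiag

variable {n : ℕ} {α : Type*}

lemma upperDiag_map [Zero α] {β : Type*} [Zero β] (M : Matrix (Fin n) (Fin n) α) {f : α → β}
    (hf : f 0 = 0) (τ : ℕ) (t : Fin n) : upperDiag (M.map f) τ t = f (upperDiag M τ t) := by
  unfold upperDiag
  split_ifs <;> simp [hf]

lemma card_upperDiag_ne_zero_le [Zero α] [DecidableEq α] (M : Matrix (Fin n) (Fin n) α) (τ : ℕ) :
    #{t | upperDiag M τ t ≠ 0} ≤ n - τ := calc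
  #{t | upperDiag M τ t ≠ 0} ≤ #{t : Fin n | (t : ℕ) < n - τ} := by
    refine card_le_card fun t ht => ?_
    rw [mem_filter_univ, upperDiag] at ht
    rw [mem_filter_univ]
    split_ifs at ht
    · omega
    · exact absurd rfl ht
  _ = n - τ := by rw [Fin.card_filter_val_lt, min_eq_right (Nat.sub_le n τ)]

lemma sum_range_upperDiag_le_sum_row [AddCommMonoid α] [PartialOrder α] [IsOrderedAddMonoid α]
    (M : Matrix (Fin n) (Fin n) α) (hM : ∀ i j, 0 ≤ M i j) (t : Fin n) :
    ∑ τ ∈ range n, upperDiag M τ t ≤ ∑ j, M t j := by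
  set g : ℕ → α := fun j => if h : j < n then M t ⟨j, h⟩ else 0
  have hg : ∀ j, 0 ≤ g j := fun j => by
    dsimp only [g]
    split_ifs
    exacts [hM _ _, le_rfl]
  calc ∑ τ ∈ range n, upperDiag M τ t = ∑ τ ∈ range n, g (t + τ) := rfl
    _ = ∑ τ ∈ range (n - t), g (t + τ) := by
      refine (sum_subset (range_subset_range.2 (Nat.sub_le _ _)) fun τ _ hτ => dif_neg ?_).symm
      rw [mem_range] at hτ
      omega
    _ = ∑ j ∈ Ico (t : ℕ) n, g j := (sum_Ico_eq_sum_range g t n).symm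
    _ ≤ ∑ j ∈ range n, g j :=
      sum_le_sum_of_subset_of_nonneg (fun j hj => mem_range.2 (mem_Ico.1 hj).2) fun j _ _ => hg j
    _ = ∑ j, M t j := by
      rw [← Fin.sum_univ_eq_sum_range]
      exact sum_congr rfl fun j _ => dif_pos j.isLt

end UpperDiag

lemma sq_sum_abs_le_card_ne_zero_mul_sum_sq {ι : Type*} [Fintype ι] (f : ι → ℝ) :
    (∑ i, |f i|) ^ 2 ≤ #{i | f i ≠ 0} * ∑ i, f i ^ 2 := calc
  (∑ i, |f i|) ^ 2 = (∑ i with f i ≠ 0, |f i|) ^ 2 := by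
    rw [sum_filter_of_ne fun i _ hi => abs_ne_zero.1 hi]
  _ ≤ #{i | f i ≠ 0} * ∑ i with f i ≠ 0, |f i| ^ 2 := sq_sum_le_card_mul_sum_sq
  _ ≤ #{i | f i ≠ 0} * ∑ i, f i ^ 2 := by
    simp only [sq_abs]
    exact mul_le_mul_of_nonneg_left (sum_le_univ_sum_of_nonneg fun i => sq_nonneg (f i))
      (Nat.cast_nonneg _)

lemma sq_sum_abs_upperDiag_le {n : ℕ} (M : Matrix (Fin n) (Fin n) ℝ) (τ : ℕ) :
    (∑ t, |upperDiag M τ t|) ^ 2 ≤ (n - τ : ℕ) * ∑ t, upperDiag M τ t ^ 2 :=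
  (sq_sum_abs_le_card_ne_zero_mul_sum_sq _).trans <| by
    gcongr
    exact_mod_cast card_upperDiag_ne_zero_le M τ

lemma sum_range_sum_upperDiag_sq_le {n : ℕ} (M : Matrix (Fin n) (Fin n) ℝ) :
    ∑ τ ∈ range n, ∑ t, upperDiag M τ t ^ 2 ≤ ∑ i, ∑ j, M i j ^ 2 := by
  rw [sum_comm]
  refine sum_le_sum fun t _ => ?_
  have h := sum_range_upperDiag_le_sum_row (M.map (· ^ 2))
    (fun i j => by simpa using sq_nonneg (M i j)) t
  simpa only [upperDiag_map M (f := (· ^ 2)) (zero_pow two_ne_zero), map_apply] using h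

lemma sum_range_inv_sub_eq_harmonic (n : ℕ) :
    ∑ τ ∈ range n, ((n - τ : ℕ) : ℝ)⁻¹ = harmonic n := by
  rw [← sum_range_reflect, harmonic]
  push_cast
  refine sum_congr rfl fun τ hτ => ?_
  rw [mem_range] at hτ
  rw [show n - (n - 1 - τ) = τ + 1 by omega]
  push_cast
  rfl

lemma sq_sum_mul_le_sum_mul_sum_mul_sq {ι : Type*} (s : Finset ι) {w : ι → ℝ}
    (hw : ∀ i ∈ s, 0 ≤ w i) (a : ι → ℝ) :
    (∑ i ∈ s, w i * a i) ^ 2 ≤ (∑ i ∈ s, w i) * ∑ i ∈ s, w i * a i ^ 2 :=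
  sum_sq_le_sum_mul_sum_of_sq_le_mul s hw (fun i hi => mul_nonneg (hw i hi) (sq_nonneg _))
    fun i _ => (by ring : _ = _).le

theorem upper_diagonal_avg_abs_sum_le_general (T : ℕ)
    (Δ : Matrix (Fin T) (Fin T) ℝ) :
    ∑ τ ∈ Finset.range T,
        (((T - τ : ℕ) : ℝ))⁻¹ *
          ∑ t : Fin T, (if h : (t : ℕ) + τ < T then |Δ t ⟨(t : ℕ) + τ, h⟩| else 0)
      ≤ Real.sqrt (1 + Real.log T) * frob Δ := by
  set w : ℕ → ℝ := fun τ => ((T - τ : ℕ) : ℝ)⁻¹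
  set a : ℕ → ℝ := fun τ => ∑ t, |upperDiag Δ τ t|
  have h_len : ∀ τ ∈ range T, (0 : ℝ) < (T - τ : ℕ) := fun τ hτ =>
    Nat.cast_pos.2 (Nat.sub_pos_of_lt (mem_range.1 hτ))
  have hw : ∀ τ ∈ range T, 0 < w τ := fun τ hτ => inv_pos.2 (h_len τ hτ)
  have h_diag : ∀ τ ∈ range T, w τ * a τ ^ 2 ≤ ∑ t, upperDiag Δ τ t ^ 2 := fun τ hτ =>
    (inv_mul_le_iff₀ (h_len τ hτ)).2 (sq_sum_abs_upperDiag_le Δ τ)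
  have h_weights : ∑ τ ∈ range T, w τ ≤ 1 + Real.log T := by
    rw [sum_range_inv_sub_eq_harmonic]
    exact harmonic_le_one_add_log T
  have h_log : 0 ≤ 1 + Real.log T := (sum_nonneg fun τ hτ => (hw τ hτ).le).trans h_weights
  have h_sq : (∑ τ ∈ range T, w τ * a τ) ^ 2 ≤ (1 + Real.log T) * ∑ i, ∑ j, Δ i j ^ 2 := calc
    _ ≤ (∑ τ ∈ range T, w τ) * ∑ τ ∈ range T, w τ * a τ ^ 2 :=
      sq_sum_mul_le_sum_mul_sum_mul_sq _ (fun τ hτ => (hw τ hτ).le) a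
    _ ≤ (1 + Real.log T) * ∑ τ ∈ range T, ∑ t, upperDiag Δ τ t ^ 2 :=
      mul_le_mul h_weights (sum_le_sum h_diag)
        (sum_nonneg fun τ hτ => mul_nonneg (hw τ hτ).le (sq_nonneg _)) h_log
    _ ≤ (1 + Real.log T) * ∑ i, ∑ j, Δ i j ^ 2 := by
      gcongr
      exact sum_range_sum_upperDiag_sq_le Δ
  calc _ = ∑ τ ∈ range T, w τ * a τ := by simp only [w, a, upperDiag, apply_dite abs, abs_zero]
    _ ≤ _ := by
      rw [frob, ← Real.sqrt_mul' _ (by positivity)]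
      exact Real.le_sqrt_of_sq_le h_sq

/-- summing the averaged absolute values of the upper diagonals of `Δ`,
`∑_{τ=0}^{T−1} (1/(T−τ)) ∑_{t=1}^{T−τ} |Δ_{t,t+τ}| ≤ √(1 + log T) · ∥Δ∥_F`. -/
theorem upper_diagonal_avg_abs_sum_le (T : ℕ) (hT : 1 ≤ T)
    (Δ : Matrix (Fin T) (Fin T) ℝ) :
    ∑ τ ∈ Finset.range T,
        (((T - τ : ℕ) : ℝ))⁻¹ *
          ∑ t : Fin T, (if h : (t : ℕ) + τ < T then |Δ t ⟨(t : ℕ) + τ, h⟩| else 0)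
      ≤ Real.sqrt (1 + Real.log T) * frob Δ :=
  upper_diagonal_avg_abs_sum_le_general T Δ
end
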